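/- Let F ⊂ ℝ₊ × ℝ^d and let H, H' ∈ (0,1) with H < H'. Then max( dim_{Ψ,H}(F), (H'/H)·dim_{Ψ,H}(F) + 1 − H'/H ) ≤ dim_{Ψ,H'}(F). -/

import Mathlib

open MeasureTheory ENNReal Set

noncomputable section

/-- The `H`-parabolic rectangle `[a, a+δ] × ∏_{j=1}^d [b_j, b_j + δ^H]`. -/
def parRect (d : ℕ) (H : ℝ) (a : ℝ) (b : Fin d → ℝ) (δ : ℝ) : Set (ℝ × (Fin d → ℝ)) :=
  Set.Icc a (a + δ) ×ˢ Set.univ.pi fun j => Set.Icc (b j) (b j + δ ^ H)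

/-- The `H`-parabolic `β`-dimensional Hausdorff content `Ψ_H^β(F)`:
the infimum of `Σ_j δ_j^β` over all countable covers of `F` by parabolic rectangles. -/
def parContent (d : ℕ) (H β : ℝ) (F : Set (ℝ × (Fin d → ℝ))) : ℝ≥0∞ :=
  ⨅ (r : ℕ → ℝ × (Fin d → ℝ) × ℝ) (_ : ∀ n, 0 < (r n).2.2)
    (_ : F ⊆ ⋃ n, parRect d H (r n).1 (r n).2.1 (r n).2.2),
    ∑' n, ENNReal.ofReal ((r n).2.2 ^ β)

/-- The `H`-parabolic Hausdorff dimension `dim_{Ψ,H}(F) = inf {β : Ψ_H^β(F) = 0}`. -/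
def parDim (d : ℕ) (H : ℝ) (F : Set (ℝ × (Fin d → ℝ))) : ℝ :=
  sInf {β : ℝ | 0 ≤ β ∧ parContent d H β F = 0}

/-! If `δ ^ H' ≤ σ ^ H`, an `H'`-rectangle of side `δ` is covered by `⌊δ / σ⌋₊ + 1` consecutive
`H`-rectangles of side `σ`. With `σ = δ ^ γ` and `δ ≤ 1` this costs at most
`2 δ ^ (min 0 (1 - γ) + γ β')`, so a cover of small cost in exponent `β` refines into one of
small cost in any exponent `β'` with `β ≤ γ β' + min 0 (1 - γ)`. Taking `γ = 1` and `γ = H' / H`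
bounds `dim_{Ψ,H}` by `β` and by `(H/H') β + 1 - H/H'` for every `β` with `Ψ_{H'}^β(F) = 0`.
Taking `γ = H / H'` in the other direction shows that if no `Ψ_{H'}^β(F)` vanishes, neither does
any `Ψ_H^β(F)`; both dimensions are then `sInf ∅ = 0`. -/

theorem parRect_subset_iUnion_parRect {d : ℕ} {H₁ H₂ a δ σ : ℝ} {b : Fin d → ℝ} (hσ : 0 < σ)
    (hσδ : δ ^ H₂ ≤ σ ^ H₁) :
    parRect d H₂ a b δ ⊆ ⋃ j : Fin (⌊δ / σ⌋₊ + 1), parRect d H₁ (a + j * σ) b σ := by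
  rintro ⟨t, x⟩ ⟨⟨hat, hta⟩, hx⟩
  have hj : ⌊(t - a) / σ⌋₊ < ⌊δ / σ⌋₊ + 1 :=
    Nat.lt_succ_of_le (Nat.floor_le_floor (by gcongr; linarith))
  have hlow := Nat.floor_le (div_nonneg (sub_nonneg.2 hat) hσ.le)
  have hupp := Nat.lt_floor_add_one ((t - a) / σ)
  rw [le_div_iff₀ hσ] at hlow
  rw [div_lt_iff₀ hσ] at hupp
  refine mem_iUnion.2 ⟨⟨_, hj⟩, ⟨?_, ?_⟩, fun k _ => ?_⟩
  · linarith
  · linarith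
  · exact ⟨(hx k trivial).1, (hx k trivial).2.trans (by linarith)⟩

theorem parContent_le_tsum {ι : Type*} [Countable ι] {d : ℕ} {H β : ℝ} (hβ : 0 < β)
    {F : Set (ℝ × (Fin d → ℝ))} (r : ι → ℝ × (Fin d → ℝ) × ℝ) (hr : ∀ i, 0 < (r i).2.2)
    (hF : F ⊆ ⋃ i, parRect d H (r i).1 (r i).2.1 (r i).2.2) :
    parContent d H β F ≤ ∑' i, ENNReal.ofReal ((r i).2.2 ^ β) := by
  refine ENNReal.le_of_forall_pos_le_add fun ε hε _ => ?_
  -- Pad the cover with rectangles of total cost below `ε`, so that it can be indexed by `ℕ`.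
  obtain ⟨η, hη, hηε⟩ := ENNReal.exists_pos_sum_of_countable (coe_ne_zero.2 hε.ne') ℕ
  let r' : ι ⊕ ℕ → ℝ × (Fin d → ℝ) × ℝ := Sum.elim r fun n => (0, 0, (η n : ℝ) ^ β⁻¹)
  have hr' : ∀ p, 0 < (r' p).2.2 := by
    rintro (i | n)
    exacts [hr i, Real.rpow_pos_of_pos (hη n) _]
  obtain ⟨e⟩ : Nonempty (ℕ ≃ ι ⊕ ℕ) := nonempty_equiv_of_countable
  have hcover : F ⊆ ⋃ n, parRect d H (r' (e n)).1 (r' (e n)).2.1 (r' (e n)).2.2 := by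
    rw [e.surjective.iUnion_comp fun p => parRect d H (r' p).1 (r' p).2.1 (r' p).2.2]
    exact hF.trans (iUnion_subset fun i => subset_iUnion_of_subset (Sum.inl i) subset_rfl)
  calc parContent d H β F ≤ ∑' n, ENNReal.ofReal ((r' (e n)).2.2 ^ β) :=
        iInf₂_le_of_le (r' ∘ e) (fun n => hr' (e n)) (iInf_le _ hcover)
    _ = ∑' i, ENNReal.ofReal ((r i).2.2 ^ β) + ∑' n, (η n : ℝ≥0∞) := by
        rw [e.tsum_eq (fun p => ENNReal.ofReal ((r' p).2.2 ^ β)),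
          ENNReal.summable.tsum_sum ENNReal.summable]
        congr 1
        refine tsum_congr fun n => ?_
        simp [r', hβ.ne']
    _ ≤ ∑' i, ENNReal.ofReal ((r i).2.2 ^ β) + ε := by gcongr

theorem floor_div_rpow_add_one_mul_rpow_le {δ γ β β' : ℝ} (hδ : 0 < δ) (hδ1 : δ ≤ 1)
    (hexp : β ≤ γ * β' + min 0 (1 - γ)) :
    ((⌊δ / δ ^ γ⌋₊ : ℝ) + 1) * (δ ^ γ) ^ β' ≤ 2 * δ ^ β := by
  set m := min 0 (1 - γ)
  have hcount : (⌊δ / δ ^ γ⌋₊ : ℝ) + 1 ≤ 2 * δ ^ m :=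
    calc (⌊δ / δ ^ γ⌋₊ : ℝ) + 1 ≤ δ / δ ^ γ + 1 := by gcongr; exact Nat.floor_le (by positivity)
      _ = δ ^ (1 - γ) + δ ^ (0 : ℝ) := by rw [Real.rpow_sub hδ, Real.rpow_one, Real.rpow_zero]
      _ ≤ δ ^ m + δ ^ m :=
          add_le_add (Real.rpow_le_rpow_of_exponent_ge hδ hδ1 (min_le_right _ _))
            (Real.rpow_le_rpow_of_exponent_ge hδ hδ1 (min_le_left _ _))
      _ = 2 * δ ^ m := by ring
  calc ((⌊δ / δ ^ γ⌋₊ : ℝ) + 1) * (δ ^ γ) ^ β' ≤ 2 * δ ^ m * (δ ^ γ) ^ β' := by gcongr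
    _ = 2 * δ ^ (m + γ * β') := by rw [← Real.rpow_mul hδ.le, mul_assoc, ← Real.rpow_add hδ]
    _ ≤ 2 * δ ^ β :=
        mul_le_mul_of_nonneg_left (Real.rpow_le_rpow_of_exponent_ge hδ hδ1 (by linarith)) zero_le_two

theorem parContent_le_two_mul_tsum {d : ℕ} {H₁ H₂ γ β β' : ℝ} (hβ' : 0 < β')
    (hγH : γ * H₁ ≤ H₂) (hexp : β ≤ γ * β' + min 0 (1 - γ)) {F : Set (ℝ × (Fin d → ℝ))}
    (r : ℕ → ℝ × (Fin d → ℝ) × ℝ) (hr : ∀ n, (r n).2.2 ∈ Ioc 0 1)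
    (hF : F ⊆ ⋃ n, parRect d H₂ (r n).1 (r n).2.1 (r n).2.2) :
    parContent d H₁ β' F ≤ 2 * ∑' n, ENNReal.ofReal ((r n).2.2 ^ β) := by
  set σ : ℕ → ℝ := fun n => (r n).2.2 ^ γ
  set k : ℕ → ℕ := fun n => ⌊(r n).2.2 / σ n⌋₊ + 1
  let r' : (Σ n, Fin (k n)) → ℝ × (Fin d → ℝ) × ℝ := fun p =>
    ((r p.1).1 + p.2 * σ p.1, (r p.1).2.1, σ p.1)
  have hσ : ∀ n, 0 < σ n := fun n => Real.rpow_pos_of_pos (hr n).1 γ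
  have hcover : F ⊆ ⋃ p, parRect d H₁ (r' p).1 (r' p).2.1 (r' p).2.2 := by
    refine hF.trans ?_
    rw [iUnion_sigma]
    refine iUnion_mono fun n => parRect_subset_iUnion_parRect (hσ n) ?_
    rw [← Real.rpow_mul (hr n).1.le]
    exact Real.rpow_le_rpow_of_exponent_ge (hr n).1 (hr n).2 hγH
  calc parContent d H₁ β' F ≤ ∑' p, ENNReal.ofReal ((r' p).2.2 ^ β') :=
        parContent_le_tsum hβ' r' (fun p => hσ p.1) hcover
    _ = ∑' n, ENNReal.ofReal (k n * σ n ^ β') := by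
        rw [ENNReal.tsum_sigma']
        simp [r', ENNReal.ofReal_mul]
    _ ≤ ∑' n, ENNReal.ofReal (2 * (r n).2.2 ^ β) := by
        refine ENNReal.tsum_le_tsum fun n => ENNReal.ofReal_le_ofReal ?_
        exact_mod_cast floor_div_rpow_add_one_mul_rpow_le (hr n).1 (hr n).2 hexp
    _ = 2 * ∑' n, ENNReal.ofReal ((r n).2.2 ^ β) := by
        simp [ENNReal.ofReal_mul, ENNReal.tsum_mul_left]

theorem parContent_eq_zero_of_parContent_eq_zero {d : ℕ} {H₁ H₂ γ β β' : ℝ} (hβ : 0 < β)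
    (hβ' : 0 < β') (hγH : γ * H₁ ≤ H₂) (hexp : β ≤ γ * β' + min 0 (1 - γ))
    {F : Set (ℝ × (Fin d → ℝ))} (h : parContent d H₂ β F = 0) : parContent d H₁ β' F = 0 := by
  refine le_antisymm (ENNReal.le_of_forall_pos_le_add fun ε hε _ => ?_) bot_le
  have hsmall : parContent d H₂ β F < min 1 ((ε : ℝ≥0∞) / 2) := by
    rw [h, lt_min_iff]
    exact ⟨one_pos, ENNReal.half_pos (coe_ne_zero.2 hε.ne')⟩
  obtain ⟨r, hr, hF, hsum⟩ : ∃ r : ℕ → ℝ × (Fin d → ℝ) × ℝ, (∀ n, 0 < (r n).2.2) ∧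
      F ⊆ ⋃ n, parRect d H₂ (r n).1 (r n).2.1 (r n).2.2 ∧
      ∑' n, ENNReal.ofReal ((r n).2.2 ^ β) < min 1 ((ε : ℝ≥0∞) / 2) := by
    simpa only [parContent, iInf_lt_iff, exists_prop] using hsmall
  -- A cover of cost below `1` uses only rectangles of side at most `1`.
  have hr1 : ∀ n, (r n).2.2 ≤ 1 := fun n => by
    have hlt := (ENNReal.le_tsum n).trans_lt (hsum.trans_le (min_le_left _ _))
    rw [ENNReal.ofReal_lt_one] at hlt
    by_contra! hn
    exact hlt.not_ge (Real.one_le_rpow hn.le hβ.le)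
  calc parContent d H₁ β' F ≤ 2 * ∑' n, ENNReal.ofReal ((r n).2.2 ^ β) :=
        parContent_le_two_mul_tsum hβ' hγH hexp r (fun n => ⟨hr n, hr1 n⟩) hF
    _ ≤ 2 * (ε / 2) := by gcongr; exact hsum.le.trans (min_le_right _ _)
    _ = 0 + ε := by rw [zero_add, ENNReal.mul_div_cancel two_ne_zero ofNat_ne_top]

theorem parContent_eq_zero_of_le {d : ℕ} {H H' β : ℝ} (hβ : 0 < β) (hHH' : H ≤ H')
    {F : Set (ℝ × (Fin d → ℝ))} (h : parContent d H' β F = 0) : parContent d H β F = 0 :=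
  parContent_eq_zero_of_parContent_eq_zero (γ := 1) hβ hβ (by simpa) (by simp) h

theorem parContent_mul_eq_zero {d : ℕ} {H H' β : ℝ} (hH : 0 < H) (hHH' : H ≤ H') (hβ : 0 < β)
    {F : Set (ℝ × (Fin d → ℝ))} (h : parContent d H β F = 0) :
    parContent d H' (H' / H * β) F = 0 := by
  have hH' : 0 < H' := hH.trans_le hHH'
  refine parContent_eq_zero_of_parContent_eq_zero (γ := H / H') hβ (by positivity) ?_ ?_ h
  · rw [div_mul_cancel₀ H hH'.ne']
  · rw [min_eq_left (sub_nonneg.2 ((div_le_one hH').2 hHH'))]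
    exact le_of_eq (by field_simp; ring)

theorem parContent_affine_eq_zero {d : ℕ} {H H' β : ℝ} (hH : 0 < H) (hHH' : H ≤ H')
    (hβ : 0 < β) {F : Set (ℝ × (Fin d → ℝ))} (h : parContent d H' β F = 0) :
    parContent d H (H / H' * β + (1 - H / H')) F = 0 := by
  have hH' : 0 < H' := hH.trans_le hHH'
  refine parContent_eq_zero_of_parContent_eq_zero (γ := H' / H) hβ ?_ ?_ ?_ h
  · exact add_pos_of_pos_of_nonneg (by positivity) (sub_nonneg.2 ((div_le_one hH').2 hHH'))
  · rw [div_mul_cancel₀ H' hH.ne']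
  · rw [min_eq_right (sub_nonpos.2 ((one_le_div hH).2 hHH'))]
    exact le_of_eq (by field_simp; ring)

theorem one_le_parContent_zero (d : ℕ) (H : ℝ) (F : Set (ℝ × (Fin d → ℝ))) :
    1 ≤ parContent d H 0 F :=
  le_iInf₂ fun r _ => le_iInf fun _ => by simp

theorem pos_of_parContent_eq_zero {d : ℕ} {H β : ℝ} {F : Set (ℝ × (Fin d → ℝ))} (hβ : 0 ≤ β)
    (h : parContent d H β F = 0) : 0 < β := by
  refine hβ.lt_of_ne ?_
  rintro rfl
  simpa [h] using one_le_parContent_zero d H F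

theorem parDim_le {d : ℕ} {H β : ℝ} {F : Set (ℝ × (Fin d → ℝ))} (hβ : 0 ≤ β)
    (h : parContent d H β F = 0) : parDim d H F ≤ β :=
  csInf_le ⟨0, fun _ hb => hb.1⟩ ⟨hβ, h⟩

theorem parDim_eq_zero {d : ℕ} {H : ℝ} {F : Set (ℝ × (Fin d → ℝ))}
    (h : ∀ β, 0 ≤ β → parContent d H β F ≠ 0) : parDim d H F = 0 := by
  have hempty : {β : ℝ | 0 ≤ β ∧ parContent d H β F = 0} = ∅ :=
    eq_empty_of_forall_notMem fun β hβ => h β hβ.1 hβ.2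
  rw [parDim, hempty, Real.sInf_empty]

theorem parDim_lower_comparison_general (d : ℕ) (H H' : ℝ) (hH : H ∈ Set.Ioo (0:ℝ) 1)
    (hHH' : H < H') (F : Set (ℝ × (Fin d → ℝ))) :
    max (parDim d H F) (H' / H * parDim d H F + 1 - H' / H) ≤ parDim d H' F := by
  have hH₀ := hH.1
  have hH'₀ := hH₀.trans hHH'
  by_cases hS' : ∃ β, 0 ≤ β ∧ parContent d H' β F = 0
  · refine le_csInf hS' ?_
    rintro β ⟨hβ₀, hβ⟩
    have hβpos := pos_of_parContent_eq_zero hβ₀ hβ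
    have hβ' : 0 ≤ H / H' * β + (1 - H / H') :=
      add_nonneg (by positivity) (sub_nonneg.2 ((div_le_one hH'₀).2 hHH'.le))
    have hdim := parDim_le hβ' (parContent_affine_eq_zero hH₀ hHH'.le hβpos hβ)
    refine max_le (parDim_le hβ₀ (parContent_eq_zero_of_le hβpos hHH'.le hβ)) ?_
    calc H' / H * parDim d H F + 1 - H' / H
        ≤ H' / H * (H / H' * β + (1 - H / H')) + 1 - H' / H := by gcongr
      _ = β := by field_simp; ring
  · push Not at hS'
    have hS : ∀ β, 0 ≤ β → parContent d H β F ≠ 0 := fun β hβ₀ hβ =>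
      hS' _ (by positivity) (parContent_mul_eq_zero hH₀ hHH'.le (pos_of_parContent_eq_zero hβ₀ hβ) hβ)
    rw [parDim_eq_zero hS, parDim_eq_zero hS']
    simpa using (one_le_div hH₀).2 hHH'.le

/-- For `F ⊂ ℝ₊ × ℝ^d` and `H, H' ∈ (0,1)` with `H < H'`:
`max(dim_{Ψ,H}(F), (H'/H)·dim_{Ψ,H}(F) + 1 − H'/H) ≤ dim_{Ψ,H'}(F)`. -/
theorem parDim_lower_comparison (d : ℕ) (H H' : ℝ) (hH : H ∈ Set.Ioo (0:ℝ) 1)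
    (hH' : H' ∈ Set.Ioo (0:ℝ) 1) (hHH' : H < H')
    (F : Set (ℝ × (Fin d → ℝ))) (hF : ∀ p ∈ F, 0 ≤ p.1) :
    max (parDim d H F) (H' / H * parDim d H F + 1 - H' / H) ≤ parDim d H' F :=
  parDim_lower_comparison_general d H H' hH hHH' F
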